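/- arXiv:2603.17047 — 2 statements merged into one kernel-verified Lean document; each statement's English description precedes it below -/
import Mathlib

section
/- Let G be a weighted graph, H ⊆ G a subgraph, α ≥ 1, and let P_{x,y} = (x = x_0, x_1, …, x_t = y) be a shortest x–y path in G. Let S = ([i_0,i_1],…,[i_{s−1},i_s]) with 0 = i_0 < i_1 < ⋯ < i_s = t be an α-segmentation of P_{x,y} with respect to H, and let H′ = H ∪ E_α(S,H). Then for every 0 ≤ ℓ < r ≤ s, dist_{H′}(x_{i_ℓ}, x_{i_r}) ≤ α · dist_G(x_{i_ℓ}, x_{i_r}). -/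
/- Weighted graphs: a `SimpleGraph V` together with a symmetric weight function
`w : V → V → ℝ≥0` that is positive on edges.  The weight of a walk is the sum of
its edge weights, and `wDist G w u v` is the shortest-path distance in `G`
(`∞` if `u` and `v` are not connected). -/

open scoped ENNReal

noncomputable def walkWeight {V : Type*} {G : SimpleGraph V} (w : V → V → NNReal)
    {u v : V} (p : G.Walk u v) : ℝ≥0∞ :=
  (p.darts.map fun d => (w d.toProd.1 d.toProd.2 : ℝ≥0∞)).sum

/-- Shortest-path distance in `G` w.r.t. the weights `w`. -/
noncomputable def wDist {V : Type*} (G : SimpleGraph V) (w : V → V → NNReal) (u v : V) : ℝ≥0∞ :=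
  ⨅ p : G.Walk u v, walkWeight w p

/-- `x 0, x 1, …, x t` is a shortest path in `G`: consecutive vertices are adjacent and
the distance in `G` between any two of its vertices is the weight of the subpath
between them (every subpath of a shortest path is shortest). -/
def IsShortestPath {V : Type*} (G : SimpleGraph V) (w : V → V → NNReal)
    (t : ℕ) (x : ℕ → V) : Prop :=
  (∀ i, i < t → G.Adj (x i) (x (i + 1))) ∧
  (∀ i j, i ≤ j → j ≤ t →
    wDist G w (x i) (x j) = ∑ m ∈ Finset.Ico i j, (w (x m) (x (m + 1)) : ℝ≥0∞))

/-- An `α`-segmentation of the path `x 0, …, x t` w.r.t. `H`: indices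
`0 = idx 0 < idx 1 < ⋯ < idx s = t` such that every segment of length `≥ 2`
has stretch at most `α` in `H`. -/
def IsSeg {V : Type*} (G H : SimpleGraph V) (w : V → V → NNReal) (α : ℝ≥0∞)
    (x : ℕ → V) (t s : ℕ) (idx : ℕ → ℕ) : Prop :=
  idx 0 = 0 ∧ idx s = t ∧ (∀ j, j < s → idx j < idx (j + 1)) ∧
  (∀ j, j < s → 2 ≤ idx (j + 1) - idx j →
    wDist H w (x (idx j)) (x (idx (j + 1))) ≤ α * wDist G w (x (idx j)) (x (idx (j + 1))))

/-- A minimal `α`-segmentation: no consecutive run of segments can be merged into a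
single segment while remaining an `α`-segmentation, i.e. the endpoints of any union of
at least two consecutive segments have stretch `> α` in `H`. -/
def IsMinimalSeg {V : Type*} (G H : SimpleGraph V) (w : V → V → NNReal) (α : ℝ≥0∞)
    (x : ℕ → V) (t s : ℕ) (idx : ℕ → ℕ) : Prop :=
  IsSeg G H w α x t s idx ∧
  ∀ a b, a + 2 ≤ b → b ≤ s →
    α * wDist G w (x (idx a)) (x (idx b)) < wDist H w (x (idx a)) (x (idx b))

/-- `E_α(S,H)`: the edges corresponding to single-edge segments whose endpoints have
stretch `> α` in `H`. -/
def segEdges {V : Type*} (H : SimpleGraph V) (w : V → V → NNReal) (α : ℝ≥0∞)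
    (x : ℕ → V) (s : ℕ) (idx : ℕ → ℕ) : Set (Sym2 V) :=
  {e | ∃ j, j < s ∧ idx (j + 1) = idx j + 1 ∧
      e = s(x (idx j), x (idx j + 1)) ∧
      α * (w (x (idx j)) (x (idx j + 1)) : ℝ≥0∞) < wDist H w (x (idx j)) (x (idx j + 1))}

/-!
Cut the path at the segmentation points `y j = x (idx j)`. Each segment `[y j, y (j+1)]` has
stretch at most `α` in `H'`: a long segment already has it in `H ⊆ H'`, and a single edge
either has it in `H` or was added to `H'`, where it is a path of weight `w ≤ α w`. Chaining
the segments with the triangle inequality bounds `dist_{H'}(y l, y r)` by `α` times the sum of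
the `G`-lengths of the segments, and on a shortest path that sum is `dist_G(y l, y r)`.
-/

open Finset

section WeightedDistance

variable {V : Type*} {G H : SimpleGraph V} {w : V → V → NNReal}

lemma walkWeight_append {u v z : V} (p : G.Walk u v) (q : G.Walk v z) :
    walkWeight w (p.append q) = walkWeight w p + walkWeight w q := by
  simp [walkWeight]

lemma wDist_le_walkWeight {u v : V} (p : G.Walk u v) : wDist G w u v ≤ walkWeight w p :=
  iInf_le _ p

lemma wDist_self (u : V) : wDist G w u u = 0 :=
  nonpos_iff_eq_zero.mp <| by simpa [walkWeight] using wDist_le_walkWeight (w := w) (.nil : G.Walk u u)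

lemma wDist_le_of_adj {u v : V} (h : G.Adj u v) : wDist G w u v ≤ w u v := by
  simpa [walkWeight] using wDist_le_walkWeight (w := w) (.cons h .nil)

lemma wDist_triangle (u v z : V) : wDist G w u z ≤ wDist G w u v + wDist G w v z := by
  simp only [wDist, ENNReal.iInf_add, ENNReal.add_iInf]
  refine le_iInf fun q => le_iInf fun p => ?_
  rw [← walkWeight_append]
  exact wDist_le_walkWeight _

lemma wDist_anti (h : G ≤ H) (u v : V) : wDist H w u v ≤ wDist G w u v := by
  refine le_iInf fun p => (wDist_le_walkWeight (p.mapLe h)).trans_eq ?_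
  simp only [walkWeight, SimpleGraph.Walk.darts_map, List.map_map]
  rfl

lemma wDist_le_sum_Ico (y : ℕ → V) {l r : ℕ} (hlr : l ≤ r) :
    wDist G w (y l) (y r) ≤ ∑ j ∈ Ico l r, wDist G w (y j) (y (j + 1)) := by
  induction r, hlr using Nat.le_induction with
  | base => simp [wDist_self]
  | succ r hlr ih =>
    rw [sum_Ico_succ_top hlr]
    exact (wDist_triangle _ (y r) _).trans (by gcongr)

end WeightedDistance

namespace IsSeg

variable {V : Type*} {G H : SimpleGraph V} {w : V → V → NNReal} {α : ℝ≥0∞}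
  {x : ℕ → V} {t s : ℕ} {idx : ℕ → ℕ}

lemma idx_mono (hseg : IsSeg G H w α x t s idx) {a b : ℕ} (hab : a ≤ b) (hb : b ≤ s) :
    idx a ≤ idx b := by
  induction b, hab using Nat.le_induction with
  | base => rfl
  | succ b _ ih => exact (ih (by omega)).trans (hseg.2.2.1 b (by omega)).le

lemma idx_le (hseg : IsSeg G H w α x t s idx) {j : ℕ} (hj : j ≤ s) : idx j ≤ t :=
  hseg.2.1 ▸ hseg.idx_mono hj le_rfl

lemma wDist_eq_sum_Ico (hP : IsShortestPath G w t x) (hseg : IsSeg G H w α x t s idx)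
    {l r : ℕ} (hlr : l ≤ r) (hr : r ≤ s) :
    wDist G w (x (idx l)) (x (idx r)) =
      ∑ j ∈ Ico l r, wDist G w (x (idx j)) (x (idx (j + 1))) := by
  induction r, hlr using Nat.le_induction with
  | base => simp [wDist_self]
  | succ r hlr ih =>
    have hl : idx l ≤ idx r := hseg.idx_mono hlr (by omega)
    have hr' : idx r ≤ idx (r + 1) := hseg.idx_mono r.le_succ hr
    rw [sum_Ico_succ_top hlr, ← ih (by omega), hP.2 _ _ hl (hseg.idx_le (by omega)),
      hP.2 _ _ hr' (hseg.idx_le hr), hP.2 _ _ (hl.trans hr') (hseg.idx_le hr),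
      sum_Ico_consecutive _ hl hr']

lemma wDist_sup_segEdges_le {α : NNReal} (hα : 1 ≤ α) (hP : IsShortestPath G w t x)
    (hseg : IsSeg G H w α x t s idx) {j : ℕ} (hj : j < s) :
    wDist (H ⊔ SimpleGraph.fromEdgeSet (segEdges H w α x s idx)) w (x (idx j)) (x (idx (j + 1)))
      ≤ α * wDist G w (x (idx j)) (x (idx (j + 1))) := by
  set H' := H ⊔ SimpleGraph.fromEdgeSet (segEdges H w α x s idx)
  have hHH' : H ≤ H' := le_sup_left
  have hstep : idx j < idx (j + 1) := hseg.2.2.1 j hj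
  by_cases hlong : 2 ≤ idx (j + 1) - idx j
  · exact (wDist_anti hHH' _ _).trans (hseg.2.2.2 j hj hlong)
  have hsucc : idx (j + 1) = idx j + 1 := by omega
  have hG : wDist G w (x (idx j)) (x (idx j + 1)) = w (x (idx j)) (x (idx j + 1)) := by
    simpa using hP.2 (idx j) (idx j + 1) (by omega) (hsucc ▸ hseg.idx_le hj)
  rw [hsucc, hG]
  rcases le_or_gt (wDist H w (x (idx j)) (x (idx j + 1))) (α * w (x (idx j)) (x (idx j + 1)))
    with hshort | hstretched
  · exact (wDist_anti hHH' _ _).trans hshort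
  have hadjG : G.Adj (x (idx j)) (x (idx j + 1)) := hP.1 _ (by have := hseg.idx_le (j := j + 1) hj; omega)
  have hadj : H'.Adj (x (idx j)) (x (idx j + 1)) :=
    Or.inr ⟨⟨j, hj, hsucc, rfl, hstretched⟩, hadjG.ne⟩
  calc wDist H' w (x (idx j)) (x (idx j + 1)) ≤ w (x (idx j)) (x (idx j + 1)) :=
        wDist_le_of_adj hadj
    _ ≤ α * w (x (idx j)) (x (idx j + 1)) :=
        le_mul_of_one_le_left bot_le (by exact_mod_cast hα)

end IsSeg

theorem completion_step_stretch_general {V : Type*} (G H : SimpleGraph V)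
    (w : V → V → NNReal)
    (α : NNReal) (hα : 1 ≤ α)
    (t : ℕ) (x : ℕ → V) (hP : IsShortestPath G w t x)
    (s : ℕ) (idx : ℕ → ℕ) (hseg : IsSeg G H w (α : ℝ≥0∞) x t s idx)
    (H' : SimpleGraph V)
    (hH' : H' = H ⊔ SimpleGraph.fromEdgeSet (segEdges H w (α : ℝ≥0∞) x s idx)) :
    ∀ l r, l < r → r ≤ s →
      wDist H' w (x (idx l)) (x (idx r)) ≤ (α : ℝ≥0∞) * wDist G w (x (idx l)) (x (idx r)) := by
  intro l r hlr hr
  subst hH'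
  calc _ ≤ ∑ j ∈ Ico l r, wDist _ w (x (idx j)) (x (idx (j + 1))) :=
        wDist_le_sum_Ico (x ∘ idx) hlr.le
    _ ≤ ∑ j ∈ Ico l r, α * wDist G w (x (idx j)) (x (idx (j + 1))) :=
        sum_le_sum fun j hj => hseg.wDist_sup_segEdges_le hα hP (by simp at hj; omega)
    _ = α * wDist G w (x (idx l)) (x (idx r)) := by
        rw [← mul_sum, hseg.wDist_eq_sum_Ico hP hlr.le hr]

/-- **Lemma.** Let `H ⊆ G`, `α ≥ 1`, let `x 0, …, x t` be a shortest `x`–`y` path in `G`,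
let `S` (given by `s, idx`) be an `α`-segmentation of it w.r.t. `H`, and let
`H' = H ∪ E_α(S,H)`.  Then for all `0 ≤ ℓ < r ≤ s`,
`dist_{H'}(x_{idx ℓ}, x_{idx r}) ≤ α · dist_G(x_{idx ℓ}, x_{idx r})`. -/
theorem completion_step_stretch {V : Type*} (G H : SimpleGraph V) (hHG : H ≤ G)
    (w : V → V → NNReal)
    (hsymm : ∀ u v, w u v = w v u)
    (hpos : ∀ u v, G.Adj u v → 0 < w u v)
    (α : NNReal) (hα : 1 ≤ α)
    (t : ℕ) (x : ℕ → V) (hP : IsShortestPath G w t x)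
    (s : ℕ) (idx : ℕ → ℕ) (hseg : IsSeg G H w (α : ℝ≥0∞) x t s idx)
    (H' : SimpleGraph V)
    (hH' : H' = H ⊔ SimpleGraph.fromEdgeSet (segEdges H w (α : ℝ≥0∞) x s idx)) :
    ∀ l r, l < r → r ≤ s →
      wDist H' w (x (idx l)) (x (idx r)) ≤ (α : ℝ≥0∞) * wDist G w (x (idx l)) (x (idx r)) :=
  completion_step_stretch_general G H w α hα t x hP s idx hseg H' hH'
end

section
/- (Local recipe for unweighted (k,k−1)-spanners.) Let k ≥ 1 be an integer and G an unweighted graph. Let H_1 ⊆ G be a subgraph such that dist_{H_1}(u,v) ≤ 2k−1 for every edge {u,v} ∈ E(G), and let H_2 ⊆ G be a subgraph such that dist_{H_2}(u,v) ≤ 2k for every pair u,v with dist_G(u,v) = 2. Then H_1 ∪ H_2 is a (k,k−1)-spanner of G: for all u,v ∈ V, dist_{H_1 ∪ H_2}(u,v) ≤ k·dist_G(u,v) + (k−1). -/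
/- Unweighted graphs: `SimpleGraph.edist` is the hop shortest-path distance in `ℕ∞`
(`⊤` if the two vertices are not connected). -/

/-- **Local recipe for unweighted `(k,k-1)`-spanners.** Let `G` be an unweighted graph,
`H₁ ⊆ G` a subgraph with `dist_{H₁}(u,v) ≤ 2k-1` for every edge `{u,v}` of `G`, and
`H₂ ⊆ G` a subgraph with `dist_{H₂}(u,v) ≤ 2k` for every pair at distance exactly `2`
in `G`.  Then `H₁ ∪ H₂` is a `(k,k-1)`-spanner of `G`:
`dist_{H₁ ∪ H₂}(u,v) ≤ k·dist_G(u,v) + (k-1)` for all `u, v`. -/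
theorem local_recipe_unweighted {V : Type*} (G H1 H2 : SimpleGraph V)
    (hH1 : H1 ≤ G) (hH2 : H2 ≤ G)
    (k : ℕ) (hk : 1 ≤ k)
    (h1 : ∀ u v : V, G.Adj u v → H1.edist u v ≤ ((2 * k - 1 : ℕ) : ℕ∞))
    (h2 : ∀ u v : V, G.edist u v = 2 → H2.edist u v ≤ ((2 * k : ℕ) : ℕ∞)) :
    ∀ u v : V,
      (H1 ⊔ H2).edist u v ≤ (k : ℕ∞) * G.edist u v + ((k - 1 : ℕ) : ℕ∞) := by
  intro u v
  by_cases hr : G.Reachable u v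
  · obtain ⟨n, hn⟩ : ∃ n : ℕ, G.edist u v = n := by
      have := SimpleGraph.edist_ne_top_iff_reachable.mpr hr
      lift G.edist u v to ℕ using this with n hn
      exact ⟨n, rfl⟩
    rw [hn]
    clear hr
    induction n using Nat.strong_induction_on generalizing u v with
    | _ n IH =>
      match n, hn with
      | 0, hn =>
        have : u = v := SimpleGraph.edist_eq_zero_iff.mp hn
        subst this
        simp [SimpleGraph.edist_self]
      | 1, hn =>
        have hadj : G.Adj u v := SimpleGraph.edist_eq_one_iff_adj.mp hn
        have hle : (H1 ⊔ H2).edist u v ≤ H1.edist u v :=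
          SimpleGraph.edist_anti le_sup_left
        refine le_trans (hle.trans (h1 u v hadj)) ?_
        have : ((2 * k - 1 : ℕ) : ℕ∞) ≤ ((k * 1 + (k - 1) : ℕ) : ℕ∞) := by
          exact_mod_cast Nat.le_of_eq (by omega)
        refine this.trans (le_of_eq ?_)
        push_cast
        ring
      | (n + 2), hn =>
        obtain ⟨p, hp⟩ := SimpleGraph.exists_walk_of_edist_eq_coe hn
        cases p with
        | nil => simp at hp
        | cons h q =>
          cases q with
          | nil => simp at hp
          | @cons x w _ h' r =>
            simp only [SimpleGraph.Walk.length_cons] at hp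
            have hrlen : r.length = n := by omega
            -- edist u w ≤ 2 via the two-edge walk
            have hle2 : G.edist u w ≤ (2 : ℕ) := by
              have := SimpleGraph.edist_le
                (SimpleGraph.Walk.cons h (SimpleGraph.Walk.cons h' SimpleGraph.Walk.nil))
              simpa using this
            have hlewv : G.edist w v ≤ (n : ℕ) := by
              have := SimpleGraph.edist_le r
              rw [hrlen] at this
              exact this
            obtain ⟨m, hm⟩ : ∃ m : ℕ, G.edist w v = m := by
              lift G.edist w v to ℕ using (ne_top_of_le_ne_top (ENat.coe_ne_top n) hlewv)
                with m hm
              exact ⟨m, rfl⟩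
            have hmn : m ≤ n := by exact_mod_cast hm ▸ hlewv
            obtain ⟨a, ha⟩ : ∃ a : ℕ, G.edist u w = a := by
              lift G.edist u w to ℕ using (ne_top_of_le_ne_top (ENat.coe_ne_top 2) hle2)
                with a ha
              exact ⟨a, rfl⟩
            have ha2 : a ≤ 2 := by exact_mod_cast ha ▸ hle2
            have htri : ((n + 2 : ℕ) : ℕ∞) ≤ ((a + m : ℕ) : ℕ∞) := by
              push_cast
              calc ((n : ℕ∞) + 2) = G.edist u v := by rw [hn]; push_cast; ring
                _ ≤ G.edist u w + G.edist w v := SimpleGraph.edist_triangle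
                _ = (a : ℕ∞) + m := by rw [ha, hm]
            have htri' : n + 2 ≤ a + m := by exact_mod_cast htri
            have haa : a = 2 := by omega
            have heq2 : G.edist u w = 2 := by rw [ha, haa]; rfl
            have step1 : (H1 ⊔ H2).edist u w ≤ ((2 * k : ℕ) : ℕ∞) :=
              (SimpleGraph.edist_anti le_sup_right).trans (h2 u w heq2)
            have step2 : (H1 ⊔ H2).edist w v ≤ (k : ℕ∞) * (m : ℕ∞) + ((k - 1 : ℕ) : ℕ∞) :=
              IH m (by omega) w v hm
            calc (H1 ⊔ H2).edist u v
                ≤ (H1 ⊔ H2).edist u w + (H1 ⊔ H2).edist w v := SimpleGraph.edist_triangle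
              _ ≤ ((2 * k : ℕ) : ℕ∞) + ((k : ℕ∞) * (m : ℕ∞) + ((k - 1 : ℕ) : ℕ∞)) :=
                  add_le_add step1 step2
              _ = ((2 * k + (k * m + (k - 1)) : ℕ) : ℕ∞) := by push_cast; ring
              _ ≤ ((k * (n + 2) + (k - 1) : ℕ) : ℕ∞) := by
                  refine Nat.cast_le.mpr ?_
                  have h3 : k * m ≤ k * n := Nat.mul_le_mul_left k hmn
                  have h4 : k * (n + 2) = k * n + k * 2 := Nat.mul_add k n 2
                  omega
              _ = (k : ℕ∞) * ((n + 2 : ℕ) : ℕ∞) + ((k - 1 : ℕ) : ℕ∞) := by push_cast; ring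
  · rw [SimpleGraph.edist_eq_top_of_not_reachable hr]
    have hktop : (k : ℕ∞) * ⊤ = ⊤ := by
      refine ENat.mul_top ?_
      exact_mod_cast Nat.one_le_iff_ne_zero.mp hk
    rw [hktop]
    simp
end
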